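/- arXiv:1310.6017 — 3 statements merged into one kernel-verified Lean document; each statement's English description precedes it below -/
import Mathlib

section
/- Let Ω ⊂ ℝ^m be a bounded open set, 0 < s < 1, 1 ≤ p < ∞, and u ∈ W^{s,p}(Ω; ℝ^ν). For every ε > 0 there exists δ > 0 such that for every Lipschitz map κ : ℝ^ν → ℝ^ν and every v ∈ W^{s,p}(Ω; ℝ^ν) with ‖u − v‖_{W^{s,p}(Ω)} ≤ δ, one has [κ∘u − κ∘v]_{W^{s,p}(Ω)} ≤ |κ|_{Lip} · ε. -/
open MeasureTheory Metric Set Filter Function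
open scoped ENNReal NNReal Manifold

noncomputable section

/-- `m`-dimensional Euclidean space. -/
abbrev Euc (m : ℕ) := EuclideanSpace ℝ (Fin m)

/-- The `p`-th power of the Gagliardo seminorm of `u` on `Ω`. -/
def gagP (m ν : ℕ) (s p : ℝ) (Ω : Set (Euc m)) (u : Euc m → Euc ν) : ℝ≥0∞ :=
  ∫⁻ x in Ω, ∫⁻ y in Ω,
    ENNReal.ofReal (‖u x - u y‖ ^ p / ‖x - y‖ ^ ((m : ℝ) + s * p))

/-- The unit cube `[0,1)^m`. -/
def unitCube (m : ℕ) : Set (Euc m) := {x | ∀ i, x i ∈ Set.Ico (0:ℝ) 1}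
/-- The full `W^{s,p}` norm (as an extended real). -/
def wnorm (m ν : ℕ) (s p : ℝ) (Ω : Set (Euc m)) (w : Euc m → Euc ν) : ℝ≥0∞ :=
  (∫⁻ x in Ω, ENNReal.ofReal (‖w x‖ ^ p)) ^ (1/p) + gagP m ν s p Ω w ^ (1/p)


/-! Split the double integral defining `[κ ∘ u - κ ∘ v]^p` at distance `ρ` from the diagonal.
Near the diagonal, `|Δ(κ ∘ u - κ ∘ v)| ≤ L (2 |Δu| + |Δ(u - v)|)`, so that part is controlled by
`[u - v]^p` and by the part of `[u]^p` within distance `ρ` of the diagonal, which tends to `0`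
with `ρ` because `[u] < ∞`. Away from the diagonal,
`|Δ(κ ∘ u - κ ∘ v)| ≤ L (|(u - v)(x)| + |(u - v)(y)|)` and the kernel is at most `ρ^{-(m+sp)}`,
so that part is at most `2 |Ω| ρ^{-(m+sp)} ‖u - v‖_p^p`. Hence one chooses `ρ` first and then
`δ`, both independently of `κ`. -/

open Topology

lemma ENNReal.ofReal_rpow_div_rpow {a b p e : ℝ} (hp : 0 < p) (ha : 0 ≤ a) (hb : 0 ≤ b)
    (hab : b = 0 → a = 0) :
    ENNReal.ofReal (a ^ p / b ^ e) = ENNReal.ofReal a ^ p / ENNReal.ofReal b ^ e := by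
  rcases hb.eq_or_lt with rfl | hb
  · simp [hab rfl, Real.zero_rpow hp.ne', ENNReal.zero_rpow_of_pos hp]
  · rw [ENNReal.ofReal_div_of_pos (Real.rpow_pos_of_pos hb e),
      ENNReal.ofReal_rpow_of_nonneg ha hp.le, ENNReal.ofReal_rpow_of_pos hb]

lemma ENNReal.rpow_div_le_of_le_mul_add {p : ℝ} (hp : 1 ≤ p) {t L a b : ℝ≥0∞}
    (h : t ≤ L * (a + b)) (d : ℝ≥0∞) :
    t ^ p / d ≤ L ^ p * 2 ^ (p - 1) * (a ^ p / d + b ^ p / d) := by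
  have hp0 : 0 ≤ p := zero_le_one.trans hp
  calc t ^ p / d ≤ (L * (a + b)) ^ p / d := by gcongr
    _ = L ^ p * (a + b) ^ p / d := by rw [ENNReal.mul_rpow_of_nonneg _ _ hp0]
    _ ≤ L ^ p * (2 ^ (p - 1) * (a ^ p + b ^ p)) / d := by
      gcongr; exact ENNReal.rpow_add_le_mul_rpow_add_rpow a b hp
    _ = L ^ p * 2 ^ (p - 1) * (a ^ p / d + b ^ p / d) := by
      rw [← ENNReal.add_div, mul_div_assoc, mul_div_assoc, mul_assoc]

lemma ENNReal.exists_pos_add_ofReal_rpow_mul_lt {a T K : ℝ≥0∞} (h : a < T) (hK : K ≠ ∞) {p : ℝ}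
    (hp : 0 < p) : ∃ δ > (0 : ℝ), a + ENNReal.ofReal δ ^ p * K < T := by
  have hpow : Tendsto (fun δ : ℝ => ENNReal.ofReal δ ^ p) (𝓝[>] 0) (𝓝 0) := by
    have := ((ENNReal.continuous_rpow_const (y := p)).comp ENNReal.continuous_ofReal).tendsto 0
    simpa [Function.comp_def, ENNReal.zero_rpow_of_pos hp] using
      this.mono_left nhdsWithin_le_nhds
  have hlim : Tendsto (fun δ : ℝ => a + ENNReal.ofReal δ ^ p * K) (𝓝[>] 0) (𝓝 a) := by
    simpa using tendsto_const_nhds.add (ENNReal.Tendsto.mul_const hpow (Or.inr hK))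
  obtain ⟨δ, hδT, hδ⟩ := ((hlim.eventually (gt_mem_nhds h)).and self_mem_nhdsWithin).exists
  exact ⟨δ, hδ, hδT⟩

lemma LipschitzWith.enorm_sub_sub_sub_le {E F : Type*} [SeminormedAddCommGroup E]
    [SeminormedAddCommGroup F] {L : ℝ≥0} {κ : E → F} (hκ : LipschitzWith L κ) (a b c d : E) :
    ‖κ a - κ b - (κ c - κ d)‖ₑ ≤ L * (‖a - b‖ₑ + ‖c - d‖ₑ) := by
  calc ‖κ a - κ b - (κ c - κ d)‖ₑ ≤ edist (κ a) (κ b) + edist (κ c) (κ d) := by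
        simpa only [edist_eq_enorm_sub] using enorm_sub_le
    _ ≤ L * edist a b + L * edist c d := add_le_add (hκ.edist_le_mul a b) (hκ.edist_le_mul c d)
    _ = L * (‖a - b‖ₑ + ‖c - d‖ₑ) := by rw [edist_eq_enorm_sub, edist_eq_enorm_sub, mul_add]

lemma lintegral_comp_fst_add_comp_snd {α : Type*} [MeasurableSpace α] {μ : Measure α} [SFinite μ]
    {g : α → ℝ≥0∞} (hg : AEMeasurable g μ) :
    ∫⁻ z, g z.1 + g z.2 ∂μ.prod μ = 2 * μ univ * ∫⁻ x, g x ∂μ := by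
  rw [lintegral_add_left' hg.comp_fst, lintegral_prod _ hg.comp_fst,
    lintegral_prod _ hg.comp_snd]
  simp only [lintegral_const]
  rw [lintegral_mul_const'' _ hg]
  ring

def nearDiagonal (X : Type*) [EDist X] (ρ : ℝ≥0∞) : Set (X × X) := {z | edist z.1 z.2 < ρ}

lemma measurableSet_nearDiagonal {X : Type*} [PseudoEMetricSpace X] [MeasurableSpace X]
    [OpensMeasurableSpace X] [SecondCountableTopology X] (ρ : ℝ≥0∞) :
    MeasurableSet (nearDiagonal X ρ) :=
  measurableSet_lt (measurable_fst.edist measurable_snd) measurable_const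

lemma tendsto_setLIntegral_nearDiagonal_nhdsGT_zero {X : Type*} [EMetricSpace X]
    [MeasurableSpace X] [OpensMeasurableSpace X] [SecondCountableTopology X]
    {μ : Measure (X × X)} {f : X × X → ℝ≥0∞} (hf : ∫⁻ z, f z ∂μ ≠ ∞)
    (hf_diag : ∀ x, f (x, x) = 0) :
    Tendsto (fun ρ => ∫⁻ z in nearDiagonal X ρ, f z ∂μ) (𝓝[>] 0) (𝓝 0) := by
  -- The integrals are the `μ.withDensity f`-measures of sets decreasing to the diagonal,
  -- which is null for that finite measure.
  have hdiag : ⋂ ρ > 0, nearDiagonal X ρ = {z | edist z.1 z.2 = 0} := by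
    ext z
    simp only [nearDiagonal, mem_iInter, mem_ofPred_eq]
    exact ⟨fun h => nonpos_iff_eq_zero.1 (le_of_forall_gt h), fun h ρ hρ => h ▸ hρ⟩
  have hdiag_meas : MeasurableSet {z : X × X | edist z.1 z.2 = 0} :=
    measurableSet_eq_fun (measurable_fst.edist measurable_snd) measurable_const
  have : IsFiniteMeasure (μ.withDensity f) := isFiniteMeasure_withDensity hf
  have hlim := tendsto_measure_biInter_gt (μ := μ.withDensity f)
    (fun ρ _ => (measurableSet_nearDiagonal ρ).nullMeasurableSet)
    (fun _ _ _ hij _ hz => lt_of_lt_of_le hz hij) ⟨1, one_pos, measure_ne_top _ _⟩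
  have hzero : μ.withDensity f {z : X × X | edist z.1 z.2 = 0} = 0 := by
    rw [withDensity_apply _ hdiag_meas]
    refine setLIntegral_eq_zero hdiag_meas fun z hz => ?_
    obtain ⟨x, y⟩ := z
    rw [Pi.zero_apply, edist_eq_zero.1 (show edist x y = 0 from hz), hf_diag]
  rw [hdiag, hzero] at hlim
  exact hlim.congr fun ρ => withDensity_apply _ (measurableSet_nearDiagonal ρ)

def gagliardoKernel {X E : Type*} [EDist X] [NormedAddCommGroup E] (e p : ℝ) (f : X → E)
    (z : X × X) : ℝ≥0∞ :=
  ‖f z.1 - f z.2‖ₑ ^ p / edist z.1 z.2 ^ e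

lemma gagliardoKernel_self {X E : Type*} [EDist X] [NormedAddCommGroup E] {p : ℝ} (hp : 0 < p)
    (e : ℝ) (f : X → E) (x : X) : gagliardoKernel e p f (x, x) = 0 := by
  simp [gagliardoKernel, ENNReal.zero_rpow_of_pos hp]

lemma AEMeasurable.gagliardoKernel {X E : Type*} [PseudoEMetricSpace X] [MeasurableSpace X]
    [OpensMeasurableSpace X] [SecondCountableTopology X] [NormedAddCommGroup E] [MeasurableSpace E]
    [BorelSpace E] [SecondCountableTopology E] {μ : Measure X} {f : X → E}
    (hf : AEMeasurable f μ) (e p : ℝ) : AEMeasurable (gagliardoKernel e p f) (μ.prod μ) :=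
  ((hf.comp_fst.sub hf.comp_snd).enorm.pow_const p).div
    ((measurable_fst.edist measurable_snd).pow_const e).aemeasurable

section Composition

variable {X E F : Type*} [PseudoEMetricSpace X] [NormedAddCommGroup E] [NormedAddCommGroup F]
  {e p : ℝ} {L : ℝ≥0} {κ : E → F}

lemma gagliardoKernel_comp_sub_comp_le (hp : 1 ≤ p) (he : 0 ≤ e) (hκ : LipschitzWith L κ)
    (u v : X → E) (ρ : ℝ≥0∞) (z : X × X) :
    gagliardoKernel e p (fun x => κ (u x) - κ (v x)) z ≤
      L ^ p * 2 ^ (p - 1) *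
        (2 ^ p * (nearDiagonal X ρ).indicator (gagliardoKernel e p u) z
          + gagliardoKernel e p (u - v) z + (‖(u - v) z.1‖ₑ ^ p + ‖(u - v) z.2‖ₑ ^ p) / ρ ^ e) := by
  obtain ⟨x, y⟩ := z
  simp only [gagliardoKernel, Pi.sub_apply]
  by_cases hxy : edist x y < ρ
  · rw [indicator_of_mem (show (x, y) ∈ nearDiagonal X ρ from hxy)]
    have hv : ‖v x - v y‖ₑ ≤ ‖u x - u y‖ₑ + ‖u x - v x - (u y - v y)‖ₑ := by
      rw [show v x - v y = u x - u y - (u x - v x - (u y - v y)) by abel]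
      exact enorm_sub_le
    have h : ‖κ (u x) - κ (v x) - (κ (u y) - κ (v y))‖ₑ
        ≤ L * (2 * ‖u x - u y‖ₑ + ‖u x - v x - (u y - v y)‖ₑ) := by
      rw [sub_sub_sub_comm]
      refine (hκ.enorm_sub_sub_sub_le _ _ _ _).trans ?_
      rw [two_mul, add_assoc]
      gcongr
    refine (ENNReal.rpow_div_le_of_le_mul_add hp h _).trans ?_
    rw [ENNReal.mul_rpow_of_nonneg _ _ (by linarith), mul_div_assoc]
    exact mul_le_mul_right le_self_add _
  · rw [indicator_of_notMem (show (x, y) ∉ nearDiagonal X ρ from hxy), mul_zero, zero_add]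
    refine (ENNReal.rpow_div_le_of_le_mul_add hp (hκ.enorm_sub_sub_sub_le _ _ _ _) _).trans ?_
    rw [← ENNReal.add_div]
    exact mul_le_mul_right
      ((ENNReal.div_le_div_left (ENNReal.rpow_le_rpow (not_lt.1 hxy) he) _).trans le_add_self) _

lemma lintegral_gagliardoKernel_comp_sub_comp_le [MeasurableSpace X] [OpensMeasurableSpace X]
    [SecondCountableTopology X] [MeasurableSpace E] [BorelSpace E] [SecondCountableTopology E]
    {μ : Measure X} [SFinite μ] (hp : 1 ≤ p) (he : 0 ≤ e) (hκ : LipschitzWith L κ) {u v : X → E}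
    (hu : AEMeasurable u μ) (hv : AEMeasurable v μ) (ρ : ℝ≥0∞) :
    ∫⁻ z, gagliardoKernel e p (fun x => κ (u x) - κ (v x)) z ∂μ.prod μ ≤
      L ^ p * 2 ^ (p - 1) *
        (2 ^ p * ∫⁻ z in nearDiagonal X ρ, gagliardoKernel e p u z ∂μ.prod μ
          + ∫⁻ z, gagliardoKernel e p (u - v) z ∂μ.prod μ
          + 2 * μ univ * (∫⁻ x, ‖(u - v) x‖ₑ ^ p ∂μ) / ρ ^ e) := by
  have hku := (hu.gagliardoKernel e p).indicator (measurableSet_nearDiagonal ρ)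
  have hkw := (hu.sub hv).gagliardoKernel (μ := μ) e p
  have hw : AEMeasurable (fun x => ‖(u - v) x‖ₑ ^ p) μ := (hu.sub hv).enorm.pow_const p
  have hfar : AEMeasurable (fun z : X × X => ‖(u - v) z.1‖ₑ ^ p + ‖(u - v) z.2‖ₑ ^ p)
      (μ.prod μ) := hw.comp_fst.add hw.comp_snd
  have hC : (L : ℝ≥0∞) ^ p * 2 ^ (p - 1) ≠ ∞ :=
    ENNReal.mul_ne_top (ENNReal.rpow_ne_top_of_nonneg (by linarith) ENNReal.coe_ne_top)
      (ENNReal.rpow_ne_top_of_nonneg (by linarith) ENNReal.ofNat_ne_top)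
  refine (lintegral_mono (gagliardoKernel_comp_sub_comp_le hp he hκ u v ρ)).trans_eq ?_
  simp_rw [div_eq_mul_inv]
  rw [lintegral_const_mul' _ _ hC, lintegral_add_right' _ (hfar.mul_const _),
    lintegral_add_right' _ hkw, lintegral_const_mul'' _ hku,
    lintegral_indicator (measurableSet_nearDiagonal ρ), lintegral_mul_const'' _ hfar,
    lintegral_comp_fst_add_comp_snd hw]

end Composition

section FractionalSobolev

variable {m ν : ℕ} {s p : ℝ} {Ω : Set (Euc m)}

lemma gagP_eq_lintegral_gagliardoKernel (hp : 0 < p) {f : Euc m → Euc ν}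
    (hf : AEMeasurable f (volume.restrict Ω)) :
    gagP m ν s p Ω f = ∫⁻ z, gagliardoKernel (m + s * p) p f z
      ∂(volume.restrict Ω).prod (volume.restrict Ω) := by
  rw [lintegral_prod _ (hf.gagliardoKernel _ _), gagP]
  refine lintegral_congr fun x => lintegral_congr fun y => ?_
  rw [ENNReal.ofReal_rpow_div_rpow hp (norm_nonneg _) (norm_nonneg _), ofReal_norm, ofReal_norm,
    ← edist_eq_enorm_sub x y]
  · rfl
  · rw [norm_eq_zero, norm_eq_zero, sub_eq_zero]
    rintro rfl
    exact sub_self _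

lemma lintegral_enorm_rpow_le_of_wnorm_le (hp : 0 < p) {w : Euc m → Euc ν} {r : ℝ≥0∞}
    (h : wnorm m ν s p Ω w ≤ r) : ∫⁻ x in Ω, ‖w x‖ₑ ^ p ≤ r ^ p := by
  rw [← ENNReal.rpow_inv_le_iff hp]
  simp_rw [← ofReal_norm, ENNReal.ofReal_rpow_of_nonneg (norm_nonneg _) hp.le]
  simpa only [wnorm, one_div] using le_self_add.trans h

lemma gagP_le_of_wnorm_le (hp : 0 < p) {w : Euc m → Euc ν} {r : ℝ≥0∞}
    (h : wnorm m ν s p Ω w ≤ r) : gagP m ν s p Ω w ≤ r ^ p := by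
  rw [← ENNReal.rpow_inv_le_iff hp]
  simpa only [wnorm, one_div] using le_add_self.trans h

lemma gagP_comp_sub_comp_le (hp : 1 ≤ p) (hs : 0 ≤ s) {u v : Euc m → Euc ν}
    (hu : AEMeasurable u (volume.restrict Ω)) (hv : AEMeasurable v (volume.restrict Ω))
    {L : ℝ≥0} {κ : Euc ν → Euc ν} (hκ : LipschitzWith L κ) {r : ℝ≥0∞}
    (hw : wnorm m ν s p Ω (u - v) ≤ r) (ρ : ℝ≥0∞) :
    gagP m ν s p Ω (fun x => κ (u x) - κ (v x)) ≤
      L ^ p * (2 ^ (p - 1) * 2 ^ p * ∫⁻ z in nearDiagonal (Euc m) ρ,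
          gagliardoKernel (m + s * p) p u z ∂(volume.restrict Ω).prod (volume.restrict Ω)
        + r ^ p * (2 ^ (p - 1) * (1 + 2 * volume Ω / ρ ^ ((m : ℝ) + s * p)))) := by
  have hp0 : 0 < p := by linarith
  have hκu := hκ.continuous.measurable.comp_aemeasurable hu
  have hκv := hκ.continuous.measurable.comp_aemeasurable hv
  have hwLp := lintegral_enorm_rpow_le_of_wnorm_le hp0 hw
  have hwgag := gagP_le_of_wnorm_le hp0 hw
  rw [gagP_eq_lintegral_gagliardoKernel hp0 (hu.sub hv)] at hwgag
  rw [gagP_eq_lintegral_gagliardoKernel (f := fun x => κ (u x) - κ (v x)) hp0 (hκu.sub hκv)]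
  calc _ ≤ _ := lintegral_gagliardoKernel_comp_sub_comp_le hp (by positivity) hκ hu hv ρ
    _ ≤ L ^ p * 2 ^ (p - 1) * (2 ^ p * ∫⁻ z in nearDiagonal (Euc m) ρ,
          gagliardoKernel (m + s * p) p u z ∂(volume.restrict Ω).prod (volume.restrict Ω)
          + r ^ p + 2 * volume Ω * r ^ p / ρ ^ ((m : ℝ) + s * p)) := by
      rw [Measure.restrict_apply_univ]
      gcongr
    _ = _ := by
      simp only [div_eq_mul_inv]
      ring

end FractionalSobolev

theorem continuity_of_composition_general (m ν : ℕ) (s p : ℝ)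
    (hs0 : 0 < s) (hp : 1 ≤ p)
    (Ω : Set (Euc m)) (hΩb : Bornology.IsBounded Ω)
    (u : Euc m → Euc ν) (humeas : AEMeasurable u (volume.restrict Ω))
    (hugag : gagP m ν s p Ω u < ⊤) :
    ∀ ε > (0:ℝ), ∃ δ > (0:ℝ),
      ∀ (L : ℝ≥0) (κ : Euc ν → Euc ν), LipschitzWith L κ →
      ∀ v : Euc m → Euc ν, AEMeasurable v (volume.restrict Ω) →
        MemLp v (ENNReal.ofReal p) (volume.restrict Ω) →
        gagP m ν s p Ω v < ⊤ →
        wnorm m ν s p Ω (fun x => u x - v x) ≤ ENNReal.ofReal δ →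
        gagP m ν s p Ω (fun x => κ (u x) - κ (v x)) ^ (1/p)
          ≤ (L : ℝ≥0∞) * ENNReal.ofReal ε := by
  intro ε hε
  have hp0 : 0 < p := by linarith
  have hC : (2 : ℝ≥0∞) ^ (p - 1) ≠ ∞ :=
    ENNReal.rpow_ne_top_of_nonneg (by linarith) ENNReal.ofNat_ne_top
  have hC2 : (2 : ℝ≥0∞) ^ (p - 1) * 2 ^ p ≠ ∞ :=
    ENNReal.mul_ne_top hC (ENNReal.rpow_ne_top_of_nonneg hp0.le ENNReal.ofNat_ne_top)
  have hT : 0 < ENNReal.ofReal ε ^ p := ENNReal.rpow_pos_of_nonneg (ENNReal.ofReal_pos.2 hε) hp0.le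
  rw [gagP_eq_lintegral_gagliardoKernel hp0 humeas] at hugag
  have hnear := ENNReal.Tendsto.const_mul (tendsto_setLIntegral_nearDiagonal_nhdsGT_zero
    hugag.ne (gagliardoKernel_self hp0 _ u)) (Or.inr hC2)
  obtain ⟨ρ, hρT, hρ⟩ :=
    ((hnear.eventually (gt_mem_nhds (by simpa using hT))).and self_mem_nhdsWithin).exists
  have hK : 2 ^ (p - 1) * (1 + 2 * volume Ω / ρ ^ ((m : ℝ) + s * p)) ≠ ∞ :=
    ENNReal.mul_ne_top hC <| ENNReal.add_ne_top.2 ⟨ENNReal.one_ne_top, ENNReal.div_ne_top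
      (ENNReal.mul_ne_top ENNReal.ofNat_ne_top hΩb.measure_lt_top.ne)
      (ENNReal.rpow_pos_of_nonneg hρ (by positivity)).ne'⟩
  obtain ⟨δ, hδ, hδT⟩ := ENNReal.exists_pos_add_ofReal_rpow_mul_lt hρT hK hp0
  refine ⟨δ, hδ, fun L κ hκ v hv _ _ hw => ?_⟩
  rw [one_div, ENNReal.rpow_inv_le_iff hp0, ENNReal.mul_rpow_of_nonneg _ _ hp0.le]
  exact (gagP_comp_sub_comp_le hp hs0.le humeas hv hκ hw ρ).trans (mul_le_mul_right hδT.le _)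

theorem continuity_of_composition (m ν : ℕ) (s p : ℝ)
    (hs0 : 0 < s) (hs1 : s < 1) (hp : 1 ≤ p)
    (Ω : Set (Euc m)) (hΩ : IsOpen Ω) (hΩb : Bornology.IsBounded Ω)
    (u : Euc m → Euc ν) (humeas : AEMeasurable u (volume.restrict Ω))
    (huLp : MemLp u (ENNReal.ofReal p) (volume.restrict Ω))
    (hugag : gagP m ν s p Ω u < ⊤) :
    ∀ ε > (0:ℝ), ∃ δ > (0:ℝ),
      ∀ (L : ℝ≥0) (κ : Euc ν → Euc ν), LipschitzWith L κ →
      ∀ v : Euc m → Euc ν, AEMeasurable v (volume.restrict Ω) →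
        MemLp v (ENNReal.ofReal p) (volume.restrict Ω) →
        gagP m ν s p Ω v < ⊤ →
        wnorm m ν s p Ω (fun x => u x - v x) ≤ ENNReal.ofReal δ →
        gagP m ν s p Ω (fun x => κ (u x) - κ (v x)) ^ (1/p)
          ≤ (L : ℝ≥0∞) * ENNReal.ofReal ε :=
  continuity_of_composition_general m ν s p hs0 hp Ω hΩb u humeas hugag
end
end

section
/- Let Ω ⊂ ℝ^m be open, v ∈ C^∞(Ω; ℝ^ν), λ ≤ min{m,ν}, and Y ⊂ ℝ^ν a (ν−λ)-dimensional plane such that every point of Y is a regular value of P∘v (P the orthogonal projection onto the orthogonal complement of the direction of Y). Then for every compact K ⊂ Ω there exists C > 0 such that for every x ∈ K, dist(x, v^{−1}(Y)) ≤ C dist(v(x), Y). -/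
open MeasureTheory Metric Set Filter Function
open scoped ENNReal NNReal Manifold
open scoped Topology

noncomputable section

/-- Key local estimate: if `f` has a surjective strict derivative at `a` and `f a = 0`,
then near `a` the distance to the zero set of `f` (intersected with any given neighborhood
of `a`) is controlled by `‖f x‖`. -/
lemma key_local_estimate {E F : Type*} [NormedAddCommGroup E] [NormedSpace ℝ E]
    [CompleteSpace E] [NormedAddCommGroup F] [NormedSpace ℝ F] [CompleteSpace F]
    {f : E → F} {f' : E →L[ℝ] F} {a : E} (hf : HasStrictFDerivAt f f' a)
    (hsurj : Function.Surjective f') (hf0 : f a = 0) {U : Set E} (hU : U ∈ 𝓝 a) :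
    ∃ ε > (0:ℝ), ∃ C > (0:ℝ), ∀ x ∈ ball a ε,
      ∃ z ∈ f ⁻¹' {0} ∩ U, dist x z ≤ C * ‖f x‖ := by
  have hrange : f'.range = ⊤ := LinearMap.range_eq_top.2 hsurj
  set fsymm := f'.nonlinearRightInverseOfSurjective hrange with hfsymm
  have hN : 0 < fsymm.nnnorm :=
    ContinuousLinearMap.nonlinearRightInverseOfSurjective_nnnorm_pos f' hrange
  set c : ℝ≥0 := fsymm.nnnorm⁻¹ / 2 with hcdef
  have hNinv : 0 < fsymm.nnnorm⁻¹ := by positivity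
  have hc : 0 < c := by positivity
  have hcN : (c : ℝ) < ((fsymm.nnnorm : ℝ))⁻¹ := by
    have h1 : (c : ℝ) = ((fsymm.nnnorm : ℝ))⁻¹ / 2 := by
      rw [hcdef]; push_cast; rfl
    have h2 : (0:ℝ) < ((fsymm.nnnorm : ℝ))⁻¹ := by
      have : (0:ℝ) < (fsymm.nnnorm : ℝ) := hN
      positivity
    rw [h1]; linarith
  set κ : ℝ := ((fsymm.nnnorm : ℝ))⁻¹ - (c : ℝ) with hκdef
  have hκ : 0 < κ := sub_pos.2 hcN
  obtain ⟨s, hs, hfs⟩ := hf.approximates_deriv_on_nhds (Or.inr hc)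
  obtain ⟨r, hr, hrs⟩ : ∃ r > 0, closedBall a r ⊆ s ∩ U :=
    nhds_basis_closedBall.mem_iff.1 (inter_mem hs hU)
  -- continuity of f at a with f a = 0 gives smallness of ‖f x‖ near a
  have hcont : ContinuousAt f a := hf.continuousAt
  have hsmall : {x | ‖f x‖ < κ * (r / 2)} ∈ 𝓝 a := by
    have h1 : ball (0 : F) (κ * (r / 2)) ∈ 𝓝 (f a) := by
      rw [hf0]; exact ball_mem_nhds _ (by positivity)
    filter_upwards [hcont h1] with x hx
    simpa [mem_ball, dist_zero_right] using hx
  obtain ⟨ε, hε, hball⟩ : ∃ ε > 0,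
      ball a ε ⊆ {x | ‖f x‖ < κ * (r / 2)} ∩ ball a (r / 2) :=
    Metric.mem_nhds_iff.1 (inter_mem hsmall (ball_mem_nhds _ (by positivity)))
  refine ⟨ε, hε, κ⁻¹, inv_pos.2 hκ, fun x hx => ?_⟩
  obtain ⟨hx1, hx2⟩ := hball hx
  simp only [mem_setOf_eq] at hx1
  rw [mem_ball] at hx2
  set εx : ℝ := ‖f x‖ / κ with hεxdef
  have hεx0 : 0 ≤ εx := by positivity
  have hεxr : εx ≤ r / 2 := by
    rw [hεxdef, div_le_iff₀ hκ]
    calc ‖f x‖ ≤ κ * (r / 2) := le_of_lt hx1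
    _ = r / 2 * κ := by ring
  have hsub : closedBall x εx ⊆ s := by
    intro z hz
    have hza : z ∈ closedBall a r := by
      rw [mem_closedBall] at hz ⊢
      calc dist z a ≤ dist z x + dist x a := dist_triangle _ _ _
      _ ≤ εx + (r / 2) := add_le_add hz (le_of_lt hx2)
      _ ≤ r / 2 + r / 2 := by linarith
      _ = r := by ring
    exact (hrs hza).1
  have hsubU : closedBall x εx ⊆ U := by
    intro z hz
    have hza : z ∈ closedBall a r := by
      rw [mem_closedBall] at hz ⊢
      calc dist z a ≤ dist z x + dist x a := dist_triangle _ _ _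
      _ ≤ εx + (r / 2) := add_le_add hz (le_of_lt hx2)
      _ ≤ r / 2 + r / 2 := by linarith
      _ = r := by ring
    exact (hrs hza).2
  have hsurjOn := hfs.surjOn_closedBall_of_nonlinearRightInverse fsymm hεx0 hsub
  have h0mem : (0 : F) ∈ closedBall (f x) ((((fsymm.nnnorm : ℝ))⁻¹ - (c:ℝ)) * εx) := by
    rw [mem_closedBall, dist_comm, dist_zero_right]
    have : κ * εx = ‖f x‖ := by
      rw [hεxdef, mul_div_cancel₀ _ (ne_of_gt hκ)]
    rw [← hκdef, this]
  obtain ⟨z, hz, hfz⟩ := hsurjOn h0mem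
  refine ⟨z, ⟨hfz, hsubU hz⟩, ?_⟩
  rw [mem_closedBall] at hz
  calc dist x z = dist z x := dist_comm _ _
  _ ≤ εx := hz
  _ = κ⁻¹ * ‖f x‖ := by rw [hεxdef, div_eq_inv_mul]

theorem distance_estimate_preimage (m ν l : ℕ) (hlm : l ≤ m) (hlν : l ≤ ν)
    (Ω : Set (Euc m)) (hΩ : IsOpen Ω) (v : Euc m → Euc ν) (hv : ContDiffOn ℝ (⊤ : ℕ∞) v Ω)
    (Y : AffineSubspace ℝ (Euc ν)) (hYne : (Y : Set (Euc ν)).Nonempty)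
    (hYdim : Module.finrank ℝ Y.direction = ν - l)
    (hreg : ∀ x ∈ Ω, v x ∈ (Y : Set (Euc ν)) →
      Function.Surjective
        (fun z : Euc m => Submodule.orthogonalProjection Y.directionᗮ (fderiv ℝ v x z))) :
    ∀ K : Set (Euc m), IsCompact K → K ⊆ Ω →
      ∃ C > (0:ℝ), ∀ x ∈ K,
        infDist x (Ω ∩ v ⁻¹' (Y : Set (Euc ν))) ≤ C * infDist (v x) (Y : Set (Euc ν)) := by
  intro K hK hKΩ
  set S : Set (Euc m) := Ω ∩ v ⁻¹' (Y : Set (Euc ν)) with hSdef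
  by_cases hS : S.Nonempty
  swap
  · -- the preimage is empty, so `infDist x S = 0`
    refine ⟨1, one_pos, fun x _ => ?_⟩
    rw [not_nonempty_iff_eq_empty] at hS
    rw [hS, infDist_empty, one_mul]
    exact infDist_nonneg
  obtain ⟨p, hp⟩ := hS
  have hYclosed : IsClosed (Y : Set (Euc ν)) := Y.closed_of_finiteDimensional
  set P := Submodule.orthogonalProjection Y.directionᗮ with hPdef
  have hPker : ∀ u : Euc ν, P u = 0 ↔ u ∈ Y.direction := by
    intro u
    rw [hPdef, Submodule.orthogonalProjectionOnto_eq_zero_iff, Submodule.orthogonal_orthogonal]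
  have hPnorm : ∀ u : Euc ν, ‖P u‖ ≤ ‖u‖ := by
    intro u
    calc ‖P u‖ ≤ ‖P‖ * ‖u‖ := P.le_opNorm u
    _ ≤ 1 * ‖u‖ := by
        apply mul_le_mul_of_nonneg_right _ (norm_nonneg u)
        exact Submodule.orthogonalProjectionOnto_norm_le _
    _ = ‖u‖ := one_mul _
  -- local claim
  have claim : ∀ a ∈ K, ∃ ε > (0:ℝ), ∃ C > (0:ℝ), ∀ x ∈ ball a ε,
      infDist x S ≤ C * infDist (v x) (Y : Set (Euc ν)) := by
    intro a haK
    have haΩ : a ∈ Ω := hKΩ haK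
    by_cases hva : v a ∈ (Y : Set (Euc ν))
    · -- regular point case: use the implicit function theorem estimate
      have hdv : HasStrictFDerivAt v (fderiv ℝ v a) a :=
        (hv.contDiffAt (hΩ.mem_nhds haΩ)).hasStrictFDerivAt (by simp)
      set D := fderiv ℝ v a with hDdef
      set f : Euc m → Y.directionᗮ := fun x => P (v x - v a) with hfdef
      have hfderiv : HasStrictFDerivAt f (P.comp D) a := by
        have h1 : HasStrictFDerivAt (fun x => v x - v a) D a := hdv.sub_const (v a)
        exact (P.hasStrictFDerivAt).comp a h1
      have hfsurj : Function.Surjective ⇑(P.comp D) := by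
        have := hreg a haΩ hva
        exact this
      have hf0 : f a = 0 := by
        simp [hfdef]
      obtain ⟨ε, hε, C, hC, H⟩ :=
        key_local_estimate hfderiv hfsurj hf0 (hΩ.mem_nhds haΩ)
      refine ⟨ε, hε, C, hC, fun x hx => ?_⟩
      obtain ⟨z, ⟨hfz, hzΩ⟩, hdist⟩ := H x hx
      have hfz' : f z = 0 := hfz
      have hvz : v z ∈ (Y : Set (Euc ν)) := by
        have : v z - v a ∈ Y.direction := (hPker _).1 hfz'
        have h2 : v z -ᵥ v a ∈ Y.direction := this
        exact (AffineSubspace.vsub_right_mem_direction_iff_mem hva _).1 h2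
      have hzS : z ∈ S := ⟨hzΩ, hvz⟩
      have hfle : ‖f x‖ ≤ infDist (v x) (Y : Set (Euc ν)) := by
        rw [infDist_eq_iInf]
        have : Nonempty (Y : Set (Euc ν)) := hYne.to_subtype
        refine le_ciInf fun y => ?_
        have hy : (y : Euc ν) ∈ (Y : Set (Euc ν)) := y.2
        have hPy : P ((y : Euc ν) - v a) = 0 := by
          rw [hPker]
          exact (AffineSubspace.vsub_right_mem_direction_iff_mem hva _).2 hy
        have heq : f x = P (v x - (y : Euc ν)) := by
          have : (v x - v a) = (v x - (y : Euc ν)) + ((y : Euc ν) - v a) := by abel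
          rw [hfdef]
          simp only [this, map_add, hPy, add_zero]
        calc ‖f x‖ = ‖P (v x - (y : Euc ν))‖ := by rw [heq]
        _ ≤ ‖v x - (y : Euc ν)‖ := hPnorm _
        _ = dist (v x) (y : Euc ν) := (dist_eq_norm _ _).symm
      calc infDist x S ≤ dist x z := infDist_le_dist_of_mem hzS
      _ ≤ C * ‖f x‖ := hdist
      _ ≤ C * infDist (v x) (Y : Set (Euc ν)) :=
          mul_le_mul_of_nonneg_left hfle (le_of_lt hC)
    · -- away from the level set: `infDist (v a) Y > 0`
      have hd : 0 < infDist (v a) (Y : Set (Euc ν)) :=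
        (hYclosed.notMem_iff_infDist_pos hYne).1 hva
      set d := infDist (v a) (Y : Set (Euc ν)) with hddef
      have hcont : ContinuousAt (fun x => infDist (v x) (Y : Set (Euc ν))) a :=
        ((continuous_infDist_pt (Y : Set (Euc ν))).continuousAt).comp
          (hv.continuousOn.continuousAt (hΩ.mem_nhds haΩ))
      have hnb : {x | d / 2 < infDist (v x) (Y : Set (Euc ν))} ∈ 𝓝 a := by
        have : Ioi (d / 2) ∈ 𝓝 (infDist (v a) (Y : Set (Euc ν))) :=
          Ioi_mem_nhds (by rw [← hddef]; linarith)
        exact hcont this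
      obtain ⟨ε₀, hε₀, hball⟩ := Metric.mem_nhds_iff.1 hnb
      set ε := min ε₀ 1 with hεdef
      have hε : 0 < ε := lt_min hε₀ one_pos
      set M : ℝ := 1 + dist a p + infDist a S with hMdef
      have hM : 0 < M := by
        have h1 : 0 ≤ dist a p := dist_nonneg
        have h2 : 0 ≤ infDist a S := infDist_nonneg
        rw [hMdef]; linarith
      refine ⟨ε, hε, M * (2 / d), by positivity, fun x hx => ?_⟩
      have hx2 : d / 2 < infDist (v x) (Y : Set (Euc ν)) :=
        hball (mem_of_mem_of_subset hx (ball_subset_ball (min_le_left _ _)))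
      have hle : infDist x S ≤ M := by
        calc infDist x S ≤ dist x p := infDist_le_dist_of_mem hp
        _ ≤ dist x a + dist a p := dist_triangle _ _ _
        _ ≤ 1 + dist a p := by
            have : dist x a < ε := mem_ball.1 hx
            have : dist x a ≤ 1 := le_of_lt (lt_of_lt_of_le this (min_le_right _ _))
            have h2 : 0 ≤ infDist a S := infDist_nonneg
            linarith
        _ ≤ M := by
            have h2 : 0 ≤ infDist a S := infDist_nonneg
            rw [hMdef]; linarith
      calc infDist x S ≤ M := hle
      _ = M * (2 / d) * (d / 2) := by field_simp
      _ ≤ M * (2 / d) * infDist (v x) (Y : Set (Euc ν)) := by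
          apply mul_le_mul_of_nonneg_left (le_of_lt hx2) (by positivity)
  -- extract data from the claim and use compactness
  choose! ε hε C hC H using claim
  obtain ⟨t, htK, hcover⟩ :=
    hK.elim_nhds_subcover (fun a => ball a (ε a)) fun a haK =>
      ball_mem_nhds a (hε a haK)
  set Ctot : ℝ := 1 + ∑ a ∈ t, C a with hCtot
  have hCnonneg : ∀ a ∈ t, 0 ≤ C a := fun a hat => le_of_lt (hC a (htK a hat))
  have hCtotpos : 0 < Ctot := by
    have : 0 ≤ ∑ a ∈ t, C a := Finset.sum_nonneg hCnonneg
    rw [hCtot]; linarith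
  refine ⟨Ctot, hCtotpos, fun x hxK => ?_⟩
  obtain ⟨a, hat, hxa⟩ : ∃ a ∈ t, x ∈ ball a (ε a) := by
    simpa using hcover hxK
  have haK : a ∈ K := htK a hat
  have hCa : C a ≤ Ctot := by
    have h1 : C a ≤ ∑ b ∈ t, C b := Finset.single_le_sum hCnonneg hat
    rw [hCtot]; linarith
  calc infDist x S ≤ C a * infDist (v x) (Y : Set (Euc ν)) := H a haK x hxa
  _ ≤ Ctot * infDist (v x) (Y : Set (Euc ν)) :=
      mul_le_mul_of_nonneg_right hCa infDist_nonneg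
end
end

section
/- Let 0 < s < 1, 1 ≤ p < ∞ with sp < 1. The indicator function χ_{Q^m} of the unit cube belongs to W^{s,p}(ℝ^m), i.e., ∫_{ℝ^m}∫_{ℝ^m} |χ_{Q^m}(x) − χ_{Q^m}(y)|^p / |x−y|^{m+sp} dx dy < ∞. -/
open MeasureTheory Metric Set Filter Function
open scoped ENNReal NNReal Manifold

noncomputable section

/-!
Substituting `y = x + h` turns the double integral into
`∫ ‖h‖^(-(m + s p)) · |Q ∆ (Q - h)| dh`. The measure of `Q ∆ (Q - h)` is at most `2`, and at
most `C ‖h‖` because the symmetric difference of two boxes lies in slabs of width `|hᵢ|` along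
their faces. So the integrand is `O(‖h‖^(1 - m - s p))` near `0`, integrable since `s p < 1`,
and `O(‖h‖^(-m - s p))` at infinity, integrable since `s p > 0`.
-/

open scoped symmDiff

theorem Set.pi_symmDiff_pi_subset {ι : Type*} [DecidableEq ι] {α : ι → Type*}
    (A B : ∀ i, Set (α i)) :
    univ.pi A ∆ univ.pi B ⊆ ⋃ i, univ.pi (update (fun j => A j ∪ B j) i (A i ∆ B i)) := by
  intro x hx
  have key : ∀ {A B : ∀ i, Set (α i)}, x ∈ univ.pi A → x ∉ univ.pi B →
      x ∈ ⋃ i, univ.pi (update (fun j => A j ∪ B j) i (A i ∆ B i)) := by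
    intro A B hA hB
    obtain ⟨i, -, hi⟩ := not_forall₂.mp hB
    refine mem_iUnion.mpr ⟨i, fun j _ => ?_⟩
    rcases eq_or_ne j i with rfl | hj
    · simpa [mem_symmDiff] using Or.inl ⟨hA j trivial, hi⟩
    · simpa [hj] using Or.inl (hA j trivial)
  rcases hx with ⟨hA, hB⟩ | ⟨hB, hA⟩
  · exact key hA hB
  · simpa only [symmDiff_comm, union_comm] using key hB hA

theorem MeasureTheory.Measure.pi_symmDiff_pi_le {ι : Type*} [Fintype ι] [DecidableEq ι]
    {α : ι → Type*} [∀ i, MeasurableSpace (α i)] (μ : ∀ i, Measure (α i))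
    [∀ i, SigmaFinite (μ i)] (A B : ∀ i, Set (α i)) :
    Measure.pi μ (univ.pi A ∆ univ.pi B)
      ≤ ∑ i, μ i (A i ∆ B i) * ∏ j ∈ Finset.univ.erase i, μ j (A j ∪ B j) := by
  calc Measure.pi μ (univ.pi A ∆ univ.pi B)
      ≤ Measure.pi μ (⋃ i, univ.pi (update (fun j => A j ∪ B j) i (A i ∆ B i))) :=
        measure_mono (Set.pi_symmDiff_pi_subset A B)
    _ ≤ ∑ i, Measure.pi μ (univ.pi (update (fun j => A j ∪ B j) i (A i ∆ B i))) :=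
        measure_iUnion_fintype_le _ _
    _ = _ := by
        refine Finset.sum_congr rfl fun i _ => ?_
        rw [Measure.pi_pi, ← Finset.mul_prod_erase _ _ (Finset.mem_univ i), update_self]
        congr 1
        exact Finset.prod_congr rfl fun j hj => by rw [update_of_ne (Finset.ne_of_mem_erase hj)]

theorem Real.volume_Ico_symmDiff_Ico_le (a b c d : ℝ) :
    volume (Ico a b ∆ Ico c d) ≤ ENNReal.ofReal |c - a| + ENNReal.ofReal |d - b| := by
  have hsub : Ico a b ∆ Ico c d ⊆ uIcc a c ∪ uIcc b d := by
    intro x hx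
    simp only [mem_symmDiff, mem_Ico, mem_union, mem_uIcc] at hx ⊢
    grind
  calc volume (Ico a b ∆ Ico c d) ≤ volume (uIcc a c ∪ uIcc b d) := measure_mono hsub
    _ ≤ volume (uIcc a c) + volume (uIcc b d) := measure_union_le _ _
    _ = _ := by rw [Real.volume_interval, Real.volume_interval]

theorem MeasureTheory.measure_symmDiff_preimage_add_right_le {G : Type*} [AddGroup G]
    [MeasurableSpace G] [MeasurableAdd G] (μ : Measure G) [μ.IsAddRightInvariant]
    (s : Set G) (g : G) :
    μ (s ∆ ((· + g) ⁻¹' s)) ≤ 2 * μ s :=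
  calc μ (s ∆ ((· + g) ⁻¹' s)) ≤ μ (s ∪ (· + g) ⁻¹' s) := measure_mono symmDiff_subset_union
    _ ≤ μ s + μ ((· + g) ⁻¹' s) := measure_union_le _ _
    _ = 2 * μ s := by rw [measure_preimage_add_right, two_mul]

theorem MeasureTheory.lintegral_lintegral_indicator_sub_rpow_div {E : Type*}
    [NormedAddCommGroup E] [MeasurableSpace E] [BorelSpace E] [SecondCountableTopology E]
    (μ : Measure E) [SFinite μ] [μ.IsAddLeftInvariant] {s : Set E} (hs : MeasurableSet s)
    {p : ℝ} (hp : 0 < p) (α : ℝ) :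
    ∫⁻ x, ∫⁻ y, ENNReal.ofReal
        (|s.indicator (fun _ => (1:ℝ)) x - s.indicator (fun _ => (1:ℝ)) y| ^ p
          / ‖x - y‖ ^ α) ∂μ ∂μ
      = ∫⁻ h, ENNReal.ofReal (‖h‖ ^ (-α)) * μ (s ∆ ((· + h) ⁻¹' s)) ∂μ := by
  set F : E → E → ℝ≥0∞ := fun x y => ENNReal.ofReal
    (|s.indicator (fun _ => (1:ℝ)) x - s.indicator (fun _ => (1:ℝ)) y| ^ p / ‖x - y‖ ^ α)
  have hF : ∀ x h, F x (x + h) = (s ∆ ((· + h) ⁻¹' s)).indicator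
      (fun _ => ENNReal.ofReal (‖h‖ ^ (-α))) x := by
    intro x h
    by_cases hx : x ∈ s <;> by_cases hxh : x + h ∈ s <;>
      simp [F, hx, hxh, mem_symmDiff, Real.zero_rpow hp.ne', Real.rpow_neg (norm_nonneg h)]
  have hFm : Measurable (uncurry fun x h => F x (x + h)) := by
    have : Measurable (s.indicator (fun _ => (1:ℝ))) := measurable_const.indicator hs
    fun_prop
  calc ∫⁻ x, ∫⁻ y, F x y ∂μ ∂μ = ∫⁻ x, ∫⁻ h, F x (x + h) ∂μ ∂μ :=
        lintegral_congr fun x => (lintegral_add_left_eq_self (F x) x).symm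
    _ = ∫⁻ h, ∫⁻ x, F x (x + h) ∂μ ∂μ := lintegral_lintegral_swap hFm.aemeasurable
    _ = _ := by
        refine lintegral_congr fun h => ?_
        simp_rw [hF]
        rw [lintegral_indicator_const (hs.symmDiff (measurable_add_const h hs)), mul_comm]

section PowerDecay

open Module

variable {E : Type*} [NormedAddCommGroup E] [NormedSpace ℝ E] [FiniteDimensional ℝ E]
  [MeasurableSpace E] [BorelSpace E] {μ : Measure E} [μ.IsAddHaarMeasure]

theorem MeasureTheory.integrableOn_ball_norm_rpow_neg [Nontrivial E] {α : ℝ}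
    (hα : α < finrank ℝ E) (r : ℝ) : IntegrableOn (fun x => ‖x‖ ^ (-α)) (ball (0 : E) r) μ :=
  integrableOn_ball_of_norm_le_rpow (C := 1) finrank_pos hα
    (ae_of_all _ fun x => by rw [one_mul, Real.norm_of_nonneg (by positivity)])
    (measurable_norm.pow_const _).aestronglyMeasurable

theorem MeasureTheory.integrableOn_compl_ball_norm_rpow_neg {α : ℝ} (hα : finrank ℝ E < α) :
    IntegrableOn (fun x => ‖x‖ ^ (-α)) (ball (0 : E) 1)ᶜ μ := by
  have hα₀ : 0 ≤ α := (Nat.cast_nonneg _).trans hα.le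
  refine ((integrable_one_add_norm hα).const_mul (2 ^ α)).integrableOn.mono'
    (measurable_norm.pow_const _).aestronglyMeasurable
    (ae_restrict_of_forall_mem measurableSet_ball.compl fun x hx => ?_)
  have hx : 1 ≤ ‖x‖ := by simpa using hx
  have hle : (2 * ‖x‖) ^ (-α) ≤ (1 + ‖x‖) ^ (-α) :=
    Real.rpow_le_rpow_of_nonpos (by positivity) (by linarith) (by linarith)
  rw [Real.norm_of_nonneg (by positivity), Real.mul_rpow zero_le_two (norm_nonneg x)] at *
  calc ‖x‖ ^ (-α) = 2 ^ α * (2 ^ (-α) * ‖x‖ ^ (-α)) := by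
        rw [← mul_assoc, ← Real.rpow_add zero_lt_two, add_neg_cancel, Real.rpow_zero, one_mul]
    _ ≤ 2 ^ α * (1 + ‖x‖) ^ (-α) := by gcongr

theorem MeasureTheory.lintegral_norm_rpow_neg_mul_lt_top [Nontrivial E] {g : E → ℝ≥0∞}
    {C₀ C₁ : ℝ≥0∞} (hC₀ : C₀ ≠ ∞) (hC₁ : C₁ ≠ ∞) (hg₀ : ∀ h, g h ≤ C₀)
    (hg₁ : ∀ h, g h ≤ C₁ * ‖h‖ₑ) {α : ℝ} (hα₀ : finrank ℝ E < α) (hα₁ : α < finrank ℝ E + 1) :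
    ∫⁻ h, ENNReal.ofReal (‖h‖ ^ (-α)) * g h ∂μ < ∞ := by
  have hα : 1 < α := (Nat.one_le_cast.mpr finrank_pos).trans_lt hα₀
  have hnear : ∀ h : E,
      ENNReal.ofReal (‖h‖ ^ (-α)) * g h ≤ C₁ * ENNReal.ofReal (‖h‖ ^ (-(α - 1))) := fun h =>
    calc ENNReal.ofReal (‖h‖ ^ (-α)) * g h ≤ ENNReal.ofReal (‖h‖ ^ (-α)) * (C₁ * ‖h‖ₑ) := by
          gcongr; exact hg₁ h
      _ = C₁ * ENNReal.ofReal (‖h‖ ^ (-(α - 1))) := by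
          rw [← ofReal_norm, mul_left_comm, ← ENNReal.ofReal_mul (by positivity),
            neg_sub, sub_eq_neg_add, Real.rpow_add_one' (norm_nonneg h) (by linarith)]
  have hfar : ∀ h : E, ENNReal.ofReal (‖h‖ ^ (-α)) * g h ≤ C₀ * ENNReal.ofReal (‖h‖ ^ (-α)) :=
    fun h => by rw [mul_comm]; gcongr; exact hg₀ h
  rw [← lintegral_add_compl _ (measurableSet_ball (x := (0 : E)) (ε := 1))]
  refine ENNReal.add_lt_top.mpr ⟨?_, ?_⟩
  · refine (lintegral_mono hnear).trans_lt ?_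
    rw [lintegral_const_mul' _ _ hC₁]
    exact ENNReal.mul_lt_top hC₁.lt_top
      (integrableOn_ball_norm_rpow_neg (by linarith) 1).setLIntegral_lt_top
  · refine (lintegral_mono hfar).trans_lt ?_
    rw [lintegral_const_mul' _ _ hC₀]
    exact ENNReal.mul_lt_top hC₀.lt_top
      (integrableOn_compl_ball_norm_rpow_neg hα₀).setLIntegral_lt_top

end PowerDecay

theorem unitCube_eq_preimage_pi (m : ℕ) :
    unitCube m = (MeasurableEquiv.toLp 2 (Fin m → ℝ)).symm ⁻¹' univ.pi fun _ => Ico 0 1 :=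
  Set.ext fun x => by simp [unitCube]

theorem measurableSet_unitCube (m : ℕ) : MeasurableSet (unitCube m) := by
  rw [unitCube_eq_preimage_pi]
  exact MeasurableEquiv.measurableSet_preimage _ |>.mpr (.univ_pi fun _ => measurableSet_Ico)

theorem volume_unitCube (m : ℕ) : volume (unitCube m) = 1 := by
  rw [unitCube_eq_preimage_pi,
    (EuclideanSpace.volume_preserving_symm_measurableEquiv_toLp _).measure_preimage_equiv,
    volume_pi_pi]
  simp

theorem volume_unitCube_symmDiff_preimage_add_le {m : ℕ} (h : Euc m) :
    volume (unitCube m ∆ ((· + h) ⁻¹' unitCube m)) ≤ 2 ^ (m + 1) * m * ‖h‖ₑ := by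
  have hcube : unitCube m ∆ ((· + h) ⁻¹' unitCube m)
      = (MeasurableEquiv.toLp 2 (Fin m → ℝ)).symm ⁻¹'
        (univ.pi (fun _ => Ico (0:ℝ) 1) ∆ univ.pi (fun i => Ico (-h i) (1 - h i))) := by
    rw [preimage_symmDiff]
    congr 1 <;> ext x <;> simp [unitCube, neg_le_iff_add_nonneg, lt_sub_iff_add_lt]
  rw [hcube,
    (EuclideanSpace.volume_preserving_symm_measurableEquiv_toLp _).measure_preimage_equiv,
    volume_pi]
  have hdiff : ∀ i, volume (Ico (0:ℝ) 1 ∆ Ico (-h i) (1 - h i)) ≤ 2 * ‖h‖ₑ := fun i => calc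
    _ ≤ ENNReal.ofReal |-h i - 0| + ENNReal.ofReal |1 - h i - 1| :=
        Real.volume_Ico_symmDiff_Ico_le _ _ _ _
    _ = 2 * ‖h i‖ₑ := by simp [Real.enorm_eq_ofReal_abs, two_mul]
    _ ≤ 2 * ‖h‖ₑ := by gcongr; exact PiLp.enorm_apply_le h i
  have hunion : ∀ j, volume (Ico (0:ℝ) 1 ∪ Ico (-h j) (1 - h j)) ≤ 2 := fun j => calc
    _ ≤ volume (Ico (0:ℝ) 1) + volume (Ico (-h j) (1 - h j)) := measure_union_le _ _
    _ = 2 := by simp [Real.volume_Ico, one_add_one_eq_two]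
  calc _ ≤ ∑ i : Fin m, volume (Ico (0:ℝ) 1 ∆ Ico (-h i) (1 - h i))
          * ∏ j ∈ Finset.univ.erase i, volume (Ico (0:ℝ) 1 ∪ Ico (-h j) (1 - h j)) :=
        Measure.pi_symmDiff_pi_le _ _ _
    _ ≤ ∑ _i : Fin m, 2 * ‖h‖ₑ * 2 ^ m := by
        refine Finset.sum_le_sum fun i _ => mul_le_mul' (hdiff i) ?_
        refine (Finset.prod_le_pow_card _ _ _ fun j _ => hunion j).trans ?_
        exact pow_le_pow_right₀ one_le_two (by simp)
    _ = 2 ^ (m + 1) * m * ‖h‖ₑ := by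
        simp only [Finset.sum_const, Finset.card_univ, Fintype.card_fin, nsmul_eq_mul]
        ring

theorem indicator_cube_mem_Wsp_general (m : ℕ) (s p : ℝ)
    (hs0 : 0 < s) (hp : 1 ≤ p) (hsp : s * p < 1) :
    (∫⁻ x : Euc m, ∫⁻ y : Euc m,
      ENNReal.ofReal
        (|Set.indicator (unitCube m) (fun _ => (1:ℝ)) x
            - Set.indicator (unitCube m) (fun _ => (1:ℝ)) y| ^ p
          / ‖x - y‖ ^ ((m:ℝ) + s * p))) < ⊤ := by
  have hp₀ : 0 < p := by linarith
  rcases Nat.eq_zero_or_pos m with rfl | hm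
  · have hcube : ∀ x : Euc 0, x ∈ unitCube 0 := fun x i => i.elim0
    simp [hcube, Real.zero_rpow hp₀.ne']
  have : Nonempty (Fin m) := ⟨⟨0, hm⟩⟩
  have hdim : (Module.finrank ℝ (Euc m) : ℝ) = m := by simp
  have hsp₀ : 0 < s * p := mul_pos hs0 hp₀
  rw [lintegral_lintegral_indicator_sub_rpow_div volume (measurableSet_unitCube m) hp₀]
  refine lintegral_norm_rpow_neg_mul_lt_top (by simp [volume_unitCube]) (by finiteness)
    (measure_symmDiff_preimage_add_right_le volume _) volume_unitCube_symmDiff_preimage_add_le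
    ?_ ?_ <;> rw [hdim] <;> linarith

theorem indicator_cube_mem_Wsp (m : ℕ) (s p : ℝ)
    (hs0 : 0 < s) (hs1 : s < 1) (hp : 1 ≤ p) (hsp : s * p < 1) :
    (∫⁻ x : Euc m, ∫⁻ y : Euc m,
      ENNReal.ofReal
        (|Set.indicator (unitCube m) (fun _ => (1:ℝ)) x
            - Set.indicator (unitCube m) (fun _ => (1:ℝ)) y| ^ p
          / ‖x - y‖ ^ ((m:ℝ) + s * p))) < ⊤ :=
  indicator_cube_mem_Wsp_general m s p hs0 hp hsp
end
end
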